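/- arXiv:2306.00280 — 7 statements merged into one kernel-verified Lean document; each statement's English description precedes it below -/
import Mathlib

section
/- Let m ≥ 2, c ∈ (0,1), and p : Fin m → ℝ with c ≤ p_i ≤ 1 for every i. Then the second largest eigenvalue of the expected squared mixing matrix satisfies λ₂(M_p) ≤ 1 − c⁴(1 − (1−c)^m)²/8. -/
open Matrix Finset

/-- The mixing matrix `W(A)`: `W(A)_{ij} = 1/|A|` if `i,j ∈ A`, `1` if `i = j ∉ A`, `0` otherwise. -/
noncomputable def mixW {m : ℕ} (A : Finset (Fin m)) : Matrix (Fin m) (Fin m) ℝ :=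
  Matrix.of fun i j => if i ∈ A ∧ j ∈ A then ((A.card : ℝ))⁻¹
    else if i = j ∧ i ∉ A then 1 else 0

/-- Bernoulli weight of a subset `A` under activation probabilities `p`. -/
noncomputable def bernWeight {m : ℕ} (p : Fin m → ℝ) (A : Finset (Fin m)) : ℝ :=
  (∏ i ∈ A, p i) * ∏ i ∈ Aᶜ, (1 - p i)

/-- The expected squared mixing matrix `M_p = Σ_A π_p(A) W(A)²`. -/
noncomputable def expSqMix {m : ℕ} (p : Fin m → ℝ) : Matrix (Fin m) (Fin m) ℝ :=
  ∑ A : Finset (Fin m), bernWeight p A • (mixW A * mixW A)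

/-- The second largest eigenvalue (counted with multiplicity) of a real symmetric matrix;
junk value `0` if the matrix is not symmetric. -/
noncomputable def lambda2 {m : ℕ} (M : Matrix (Fin m) (Fin m) ℝ) : ℝ :=
  if hM : M.IsHermitian then
    ((Finset.univ.val.map hM.eigenvalues).sort (· ≤ ·)).getD (m - 2) 0
  else 0


/-!
Each `W(A)` is a symmetric idempotent stochastic matrix, so `M_p = Σ_A π_p(A) W(A)` is symmetric and
stochastic. Its entry `(i, j)` is at least `P(i, j ∈ A) / m ≥ c² / m`, since `W(A)_{ij} = 1/|A| ≥ 1/m`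
when both are active. Subtracting the constant matrix `(c²/m) J`, which vanishes on `1^⊥`, leaves a
nonnegative symmetric matrix with row sums `1 - c²`, so the quadratic form of `M_p` on `1^⊥` is at
most `(1 - c²) |x|²`. A codimension-one subspace meets the span of any two eigenvectors, hence at
most one eigenvalue exceeds `1 - c²`, and `λ₂(M_p) ≤ 1 - c²`, which is stronger than the claim.
-/

theorem Multiset.sort_getD_le_of_countP_le_one {α : Type*} [LinearOrder α] {s : Multiset α}
    {n : ℕ} (hs : Multiset.card s = n + 2) {t : α} (h : s.countP (t < ·) ≤ 1) (d : α) :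
    (s.sort (· ≤ ·)).getD n d ≤ t := by
  set l := s.sort (· ≤ ·)
  have hlen : l.length = n + 2 := by rw [Multiset.length_sort, hs]
  rw [List.getD_eq_getElem l d (by omega)]
  by_contra! hlt
  have hnext : t < l[n + 1] := hlt.trans_le <|
    List.pairwise_iff_getElem.mp (Multiset.pairwise_sort s _) n (n + 1) _ _ (by omega)
  have htail : l.drop n = [l[n], l[n + 1]] := by
    rw [List.drop_eq_getElem_cons, List.drop_eq_getElem_cons, List.drop_eq_nil_of_le]
    omega
  have hcount : 2 ≤ l.countP (t < ·) :=
    calc 2 = (l.drop n).countP (t < ·) := by simp [htail, hlt, hnext]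
      _ ≤ _ := (List.drop_sublist n l).countP_le
  have hsort : s.countP (t < ·) = l.countP (t < ·) := by rw [← Multiset.coe_countP, Multiset.sort_eq]
  omega

theorem Matrix.IsHermitian.card_eigenvalues_gt_le_one {n : Type*} [Fintype n] [DecidableEq n]
    {A : Matrix n n ℝ} (hA : A.IsHermitian) (w : n → ℝ) {t : ℝ}
    (h : ∀ x, w ⬝ᵥ x = 0 → x ⬝ᵥ A *ᵥ x ≤ t * (x ⬝ᵥ x)) :
    #{i | t < hA.eigenvalues i} ≤ 1 := by
  by_contra! hcard
  obtain ⟨i, hi, j, hj, hij⟩ := one_lt_card.mp hcard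
  simp only [mem_filter, mem_univ, true_and] at hi hj
  have hdot (k l : n) : (⇑(hA.eigenvectorBasis k) : n → ℝ) ⬝ᵥ ⇑(hA.eigenvectorBasis l) =
      if k = l then 1 else 0 := by
    have := orthonormal_iff_ite.mp hA.eigenvectorBasis.orthonormal k l
    rw [EuclideanSpace.inner_eq_star_dotProduct] at this
    simpa [dotProduct_comm] using this
  set u : n → ℝ := ⇑(hA.eigenvectorBasis i)
  set v : n → ℝ := ⇑(hA.eigenvectorBasis j)
  have hAu : A *ᵥ u = hA.eigenvalues i • u := hA.mulVec_eigenvectorBasis i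
  have hAv : A *ᵥ v = hA.eigenvalues j • v := hA.mulVec_eigenvectorBasis j
  have huu : u ⬝ᵥ u = 1 := by simpa using hdot i i
  have hvv : v ⬝ᵥ v = 1 := by simpa using hdot j j
  have huv : u ⬝ᵥ v = 0 := by simpa [hij] using hdot i j
  have hvu : v ⬝ᵥ u = 0 := by rwa [dotProduct_comm]
  obtain ⟨a, b, hab, hw⟩ : ∃ a b : ℝ, 0 < a ^ 2 + b ^ 2 ∧ w ⬝ᵥ (a • u + b • v) = 0 := by
    by_cases hu : w ⬝ᵥ u = 0
    · exact ⟨1, 0, by norm_num, by simp [hu]⟩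
    · refine ⟨w ⬝ᵥ v, -(w ⬝ᵥ u), ?_, ?_⟩
      · rw [neg_sq]
        exact lt_add_of_le_of_pos (sq_nonneg _) (sq_pos_of_ne_zero hu)
      simp only [dotProduct_add, dotProduct_smul, smul_eq_mul]
      ring
  have hform := h _ hw
  simp only [mulVec_add, mulVec_smul, hAu, hAv, dotProduct_add, add_dotProduct,
    dotProduct_smul, smul_dotProduct, smul_eq_mul, huu, hvv, huv, hvu] at hform
  set μ := hA.eigenvalues i
  set ν := hA.eigenvalues j
  have hgap : 0 < min μ ν - t := sub_pos.mpr (lt_min hi hj)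
  nlinarith [mul_pos hab hgap, mul_nonneg (sq_nonneg a) (sub_nonneg.mpr (min_le_left μ ν)),
    mul_nonneg (sq_nonneg b) (sub_nonneg.mpr (min_le_right μ ν))]

theorem Matrix.dotProduct_mulVec_le_of_nonneg {n : Type*} [Fintype n] {N : Matrix n n ℝ}
    (hN : N.IsSymm) (h0 : ∀ i j, 0 ≤ N i j) {r : ℝ} (hr : ∀ i, ∑ j, N i j ≤ r) (x : n → ℝ) :
    x ⬝ᵥ N *ᵥ x ≤ r * (x ⬝ᵥ x) :=
  calc x ⬝ᵥ N *ᵥ x = ∑ i, ∑ j, x i * (N i j * x j) := by simp [dotProduct, mulVec, mul_sum]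
    _ ≤ ∑ i, ∑ j, (N i j * x i ^ 2 / 2 + N j i * x j ^ 2 / 2) := by
      gcongr with i _ j _
      rw [hN.apply i j]
      nlinarith [mul_nonneg (h0 i j) (sq_nonneg (x i - x j))]
    _ = ∑ i, (∑ j, N i j) * x i ^ 2 := by
      simp only [sum_add_distrib, sum_mul]
      rw [sum_comm (f := fun i j => N j i * x j ^ 2 / 2), ← sum_add_distrib]
      refine sum_congr rfl fun i _ => ?_
      rw [← sum_add_distrib]
      exact sum_congr rfl fun j _ => by ring
    _ ≤ ∑ i, r * x i ^ 2 := by gcongr with i; exact hr i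
    _ = r * (x ⬝ᵥ x) := by simp [dotProduct, mul_sum, sq]

theorem Matrix.dotProduct_mulVec_le_of_le_apply {n : Type*} [Fintype n] {M : Matrix n n ℝ}
    (hM : M.IsSymm) {α s : ℝ} (hα : ∀ i j, α ≤ M i j) (hs : ∀ i, ∑ j, M i j ≤ s) {x : n → ℝ}
    (hx : ∑ i, x i = 0) :
    x ⬝ᵥ M *ᵥ x ≤ (s - Fintype.card n * α) * (x ⬝ᵥ x) := by
  have hJx : (of fun _ _ => α : Matrix n n ℝ) *ᵥ x = 0 := by
    ext i; simp [mulVec, dotProduct, ← mul_sum, hx]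
  have hrow (i : n) : ∑ j, (M - of fun _ _ => α : Matrix n n ℝ) i j ≤ s - Fintype.card n * α := by
    simp only [sub_apply, of_apply, sum_sub_distrib, sum_const, card_univ, nsmul_eq_mul]
    linarith [hs i]
  calc x ⬝ᵥ M *ᵥ x = x ⬝ᵥ (M - of fun _ _ => α) *ᵥ x := by rw [sub_mulVec, hJx, sub_zero]
    _ ≤ _ := dotProduct_mulVec_le_of_nonneg (hM.sub (IsSymm.ext fun _ _ => rfl))
      (fun i j => sub_nonneg.mpr (hα i j)) hrow x

theorem lambda2_le_of_dotProduct_mulVec_le {m : ℕ} (hm : 2 ≤ m) {M : Matrix (Fin m) (Fin m) ℝ}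
    (hM : M.IsHermitian) {t : ℝ} (h : ∀ x, ∑ i, x i = 0 → x ⬝ᵥ M *ᵥ x ≤ t * (x ⬝ᵥ x)) :
    lambda2 M ≤ t := by
  rw [lambda2, dif_pos hM]
  refine Multiset.sort_getD_le_of_countP_le_one (by simp; omega) ?_ 0
  rw [Multiset.countP_map]
  exact hM.card_eigenvalues_gt_le_one 1 fun x hx => h x (by rwa [one_dotProduct] at hx)

theorem mixW_apply_of_mem {m : ℕ} {A : Finset (Fin m)} {i : Fin m} (hi : i ∈ A) (j : Fin m) :
    mixW A i j = if j ∈ A then (#A : ℝ)⁻¹ else 0 := by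
  by_cases hj : j ∈ A <;> simp [mixW, hi, hj]

theorem mixW_apply_of_notMem {m : ℕ} {A : Finset (Fin m)} {i : Fin m} (hi : i ∉ A) (j : Fin m) :
    mixW A i j = if i = j then 1 else 0 := by
  simp [mixW, hi]

theorem mixW_mul_self {m : ℕ} (A : Finset (Fin m)) : mixW A * mixW A = mixW A := by
  ext i j
  rw [mul_apply]
  by_cases hi : i ∈ A
  · have hA : (#A : ℝ) ≠ 0 := by exact_mod_cast (card_pos.mpr ⟨i, hi⟩).ne'
    simp only [mixW_apply_of_mem hi, ite_mul, zero_mul, sum_ite_mem, univ_inter]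
    rw [sum_congr rfl fun k hk => by rw [mixW_apply_of_mem hk], sum_const, nsmul_eq_mul]
    split_ifs <;> field_simp
  · simp [mixW_apply_of_notMem hi]

theorem sum_mixW_apply {m : ℕ} (A : Finset (Fin m)) (i : Fin m) : ∑ j, mixW A i j = 1 := by
  by_cases hi : i ∈ A
  · have hA : (#A : ℝ) ≠ 0 := by exact_mod_cast (card_pos.mpr ⟨i, hi⟩).ne'
    simp [mixW_apply_of_mem hi, hA]
  · simp [mixW_apply_of_notMem hi]

theorem mixW_isSymm {m : ℕ} (A : Finset (Fin m)) : (mixW A).IsSymm :=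
  IsSymm.ext fun i j => by by_cases hij : i = j <;> simp [mixW, hij, and_comm, eq_comm]

theorem mixW_nonneg {m : ℕ} (A : Finset (Fin m)) (i j : Fin m) : 0 ≤ mixW A i j := by
  simp only [mixW, of_apply]; split_ifs <;> positivity

theorem ite_subset_le_mixW_apply {m : ℕ} (A : Finset (Fin m)) (i j : Fin m) :
    (if {i, j} ⊆ A then (m : ℝ)⁻¹ else 0) ≤ mixW A i j := by
  split_ifs with hA
  · rw [insert_subset_iff, singleton_subset_iff] at hA
    rw [mixW_apply_of_mem hA.1, if_pos hA.2]
    have hcard : #A ≤ m := by simpa using card_le_univ A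
    exact inv_anti₀ (by exact_mod_cast card_pos.mpr ⟨i, hA.1⟩) (by exact_mod_cast hcard)
  · exact mixW_nonneg A i j

theorem bernWeight_nonneg {m : ℕ} {p : Fin m → ℝ} (hp : ∀ i, 0 ≤ p i ∧ p i ≤ 1)
    (A : Finset (Fin m)) : 0 ≤ bernWeight p A :=
  mul_nonneg (prod_nonneg fun i _ => (hp i).1) (prod_nonneg fun i _ => sub_nonneg.mpr (hp i).2)

theorem sum_bernWeight_filter_subset {m : ℕ} (p : Fin m → ℝ) (S : Finset (Fin m)) :
    ∑ A with S ⊆ A, bernWeight p A = ∏ i ∈ S, p i := by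
  -- expand `∏ i, (p i + q i)` where `q` vanishes on `S`, so only the `A ⊇ S` survive
  set q : Fin m → ℝ := fun i => if i ∈ S then 0 else 1 - p i
  have hexpand := Fintype.prod_add p q
  have hlhs : ∏ i, (p i + q i) = ∏ i ∈ S, p i := by
    have hS : ∏ i ∈ S, (p i + q i) = ∏ i ∈ S, p i := prod_congr rfl fun i hi => by simp [q, hi]
    have hSc : ∏ i ∈ Sᶜ, (p i + q i) = 1 := prod_eq_one fun i hi => by simp [q, mem_compl.mp hi]
    rw [← prod_mul_prod_compl S, hS, hSc, mul_one]
  rw [hlhs] at hexpand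
  rw [hexpand, sum_filter]
  refine sum_congr rfl fun A _ => ?_
  split_ifs with hSA
  · refine congrArg _ (prod_congr rfl fun i hi => ?_)
    have hiS : i ∉ S := fun h => mem_compl.mp hi (hSA h)
    simp [q, hiS]
  · obtain ⟨i, hiS, hiA⟩ := not_subset.mp hSA
    rw [prod_eq_zero (mem_compl.mpr hiA) (by simp [q, hiS]), mul_zero]

theorem sum_bernWeight {m : ℕ} (p : Fin m → ℝ) : ∑ A, bernWeight p A = 1 := by
  simpa using sum_bernWeight_filter_subset p ∅

theorem expSqMix_apply {m : ℕ} (p : Fin m → ℝ) (i j : Fin m) :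
    expSqMix p i j = ∑ A, bernWeight p A * mixW A i j := by
  simp [expSqMix, mixW_mul_self, Matrix.sum_apply]

theorem expSqMix_isSymm {m : ℕ} (p : Fin m → ℝ) : (expSqMix p).IsSymm :=
  IsSymm.ext fun i j => by simp only [expSqMix_apply, (mixW_isSymm _).apply]

theorem sum_expSqMix_apply {m : ℕ} (p : Fin m → ℝ) (i : Fin m) : ∑ j, expSqMix p i j = 1 := by
  simp only [expSqMix_apply]
  rw [sum_comm]
  simp [← mul_sum, sum_mixW_apply, sum_bernWeight]

theorem prod_pair_div_le_expSqMix_apply {m : ℕ} {p : Fin m → ℝ} (hp : ∀ i, 0 ≤ p i ∧ p i ≤ 1)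
    (i j : Fin m) : (∏ k ∈ {i, j}, p k) / m ≤ expSqMix p i j := by
  rw [← sum_bernWeight_filter_subset, sum_filter, sum_div, expSqMix_apply]
  gcongr with A
  calc (if {i, j} ⊆ A then bernWeight p A else 0) / m
      = bernWeight p A * if {i, j} ⊆ A then (m : ℝ)⁻¹ else 0 := by
        split_ifs <;> simp [div_eq_mul_inv]
    _ ≤ bernWeight p A * mixW A i j :=
      mul_le_mul_of_nonneg_left (ite_subset_le_mixW_apply A i j) (bernWeight_nonneg hp A)

theorem sq_div_le_expSqMix_apply {m : ℕ} {c : ℝ} (hc : 0 ≤ c) {p : Fin m → ℝ}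
    (hp : ∀ i, c ≤ p i ∧ p i ≤ 1) (i j : Fin m) : c ^ 2 / m ≤ expSqMix p i j := by
  have hp01 (k : Fin m) : 0 ≤ p k ∧ p k ≤ 1 := ⟨hc.trans (hp k).1, (hp k).2⟩
  refine le_trans ?_ (prod_pair_div_le_expSqMix_apply hp01 i j)
  gcongr
  by_cases hij : i = j
  · subst hij
    simp only [insert_eq_of_mem (mem_singleton_self i), prod_singleton]
    nlinarith [hp i]
  · rw [prod_pair hij, sq]
    exact mul_le_mul (hp i).1 (hp j).1 hc (hp01 i).1

theorem expSqMix_isHermitian {m : ℕ} (p : Fin m → ℝ) : (expSqMix p).IsHermitian :=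
  isHermitian_iff_isSymm.mpr (expSqMix_isSymm p)

theorem dotProduct_expSqMix_mulVec_le {m : ℕ} (hm : m ≠ 0) {c : ℝ} (hc : 0 ≤ c) {p : Fin m → ℝ}
    (hp : ∀ i, c ≤ p i ∧ p i ≤ 1) {x : Fin m → ℝ} (hx : ∑ i, x i = 0) :
    x ⬝ᵥ expSqMix p *ᵥ x ≤ (1 - c ^ 2) * (x ⬝ᵥ x) := by
  have hbound := dotProduct_mulVec_le_of_le_apply (expSqMix_isSymm p)
    (sq_div_le_expSqMix_apply hc hp) (fun i => (sum_expSqMix_apply p i).le) hx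
  rwa [Fintype.card_fin, mul_div_cancel₀ _ (Nat.cast_ne_zero.mpr hm)] at hbound

theorem lambda2_expSqMix_le {m : ℕ} (hm : 2 ≤ m) (c : ℝ) (hc : c ∈ Set.Ioo (0:ℝ) 1)
    (p : Fin m → ℝ) (hp : ∀ i, c ≤ p i ∧ p i ≤ 1) :
    lambda2 (expSqMix p) ≤ 1 - c ^ 4 * (1 - (1 - c) ^ m) ^ 2 / 8 := by
  obtain ⟨hc0, hc1⟩ := hc
  have hgap : c ^ 4 * (1 - (1 - c) ^ m) ^ 2 / 8 ≤ c ^ 2 := by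
    have h0 : 0 ≤ (1 - c) ^ m := pow_nonneg (by linarith) m
    have h1 : (1 - c) ^ m ≤ 1 := pow_le_one₀ (by linarith) (by linarith)
    have hq : (1 - (1 - c) ^ m) ^ 2 ≤ 1 := pow_le_one₀ (by linarith) (by linarith)
    have h4 : c ^ 4 ≤ c ^ 2 := pow_le_pow_of_le_one hc0.le hc1.le (by norm_num)
    nlinarith [mul_le_of_le_one_right (pow_nonneg hc0.le 4) hq]
  calc lambda2 (expSqMix p) ≤ 1 - c ^ 2 :=
        lambda2_le_of_dotProduct_mulVec_le hm (expSqMix_isHermitian p)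
          fun x hx => dotProduct_expSqMix_mulVec_le (by omega) hc0.le hp hx
    _ ≤ _ := by linarith
end

section
/- Let f : ℝ^d → ℝ be differentiable with L-Lipschitz gradient (L > 0), let η > 0, and define the gradient-descent iterates x_0 ∈ ℝ^d arbitrary and x_{k+1} = x_k − η·∇f(x_k). Then for every integer s ≥ 1, ‖ Σ_{k=0}^{s−1} ( ∇f(x_k) − ∇f(x_0) ) ‖ ≤ ( ((1+ηL)^s − 1 − sηL)/(ηL) )·‖∇f(x_0)‖. -/
open Finset

/-!
Write `g k = ∇f(x_k)` and `c = ηL`. Since `x_{k+1} - x_k = -η g k`, the Lipschitz bound gives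
`‖g (k+1) - g k‖ ≤ c ‖g k‖`, so the gradients grow at most geometrically and
`‖g k - g 0‖ ≤ ((1 + c)^k - 1) ‖g 0‖`. Summing over `k < s` and evaluating the geometric sum
`∑_{k<s} ((1 + c)^k - 1) = ((1 + c)^s - 1 - s c) / c` gives the bound.
-/

section RelativeIncrements

variable {E : Type*} [SeminormedAddCommGroup E] {g : ℕ → E} {c : ℝ}

theorem norm_sub_zero_le_of_norm_sub_succ_le (hc : 0 ≤ c)
    (hstep : ∀ k, ‖g (k + 1) - g k‖ ≤ c * ‖g k‖) (k : ℕ) :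
    ‖g k - g 0‖ ≤ ((1 + c) ^ k - 1) * ‖g 0‖ := by
  induction k with
  | zero => simp
  | succ k ih =>
    have hgk : ‖g k‖ ≤ (1 + c) ^ k * ‖g 0‖ := by
      calc ‖g k‖ ≤ ‖g k - g 0‖ + ‖g 0‖ := norm_le_norm_sub_add _ _
        _ ≤ (1 + c) ^ k * ‖g 0‖ := by linarith
    calc ‖g (k + 1) - g 0‖ ≤ ‖g (k + 1) - g k‖ + ‖g k - g 0‖ :=
          norm_sub_le_norm_sub_add_norm_sub _ _ _
      _ ≤ c * ((1 + c) ^ k * ‖g 0‖) + ((1 + c) ^ k - 1) * ‖g 0‖ := by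
          gcongr
          exact (hstep k).trans (by gcongr)
      _ = ((1 + c) ^ (k + 1) - 1) * ‖g 0‖ := by ring

theorem norm_sum_sub_zero_le_of_norm_sub_succ_le (hc : 0 ≤ c)
    (hstep : ∀ k, ‖g (k + 1) - g k‖ ≤ c * ‖g k‖) (s : ℕ) :
    ‖∑ k ∈ range s, (g k - g 0)‖ ≤ (∑ k ∈ range s, ((1 + c) ^ k - 1)) * ‖g 0‖ := by
  rw [sum_mul]
  exact (norm_sum_le _ _).trans
    (sum_le_sum fun k _ => norm_sub_zero_le_of_norm_sub_succ_le hc hstep k)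

end RelativeIncrements

theorem sum_range_one_add_pow_sub_one {c : ℝ} (hc : c ≠ 0) (s : ℕ) :
    ∑ k ∈ range s, ((1 + c) ^ k - 1) = ((1 + c) ^ s - 1 - s * c) / c := by
  rw [sum_sub_distrib, geom_sum_eq (by simpa using hc), add_sub_cancel_left]
  field_simp
  simp

theorem norm_sub_le_of_descent_step {E : Type*} [SeminormedAddCommGroup E] [NormedSpace ℝ E]
    {G : E → E} {L η : ℝ} (hη : 0 ≤ η) (hlip : ∀ x y, ‖G x - G y‖ ≤ L * ‖x - y‖)
    {x x' : E} (hx' : x' = x - η • G x) :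
    ‖G x' - G x‖ ≤ η * L * ‖G x‖ := by
  calc ‖G x' - G x‖ ≤ L * ‖x' - x‖ := hlip _ _
    _ = η * L * ‖G x‖ := by
      rw [hx', sub_sub_cancel_left, norm_neg, norm_smul, Real.norm_of_nonneg hη]
      ring

theorem gd_local_perturbation_general {d : ℕ} (f : EuclideanSpace ℝ (Fin d) → ℝ)
    (L : ℝ) (hL : 0 < L)
    (hlip : ∀ x y, ‖gradient f x - gradient f y‖ ≤ L * ‖x - y‖)
    (η : ℝ) (hη : 0 < η) (x : ℕ → EuclideanSpace ℝ (Fin d))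
    (hx : ∀ k, x (k + 1) = x k - η • gradient f (x k))
    (s : ℕ) :
    ‖∑ k ∈ Finset.range s, (gradient f (x k) - gradient f (x 0))‖ ≤
      ((1 + η * L) ^ s - 1 - s * η * L) / (η * L) * ‖gradient f (x 0)‖ := by
  have hc : 0 < η * L := mul_pos hη hL
  have hstep : ∀ k, ‖gradient f (x (k + 1)) - gradient f (x k)‖ ≤ η * L * ‖gradient f (x k)‖ :=
    fun k => norm_sub_le_of_descent_step hη.le hlip (hx k)
  have hsum := norm_sum_sub_zero_le_of_norm_sub_succ_le
    (g := fun k => gradient f (x k)) hc.le hstep s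
  rwa [sum_range_one_add_pow_sub_one hc.ne', ← mul_assoc] at hsum

theorem gd_local_perturbation {d : ℕ} (f : EuclideanSpace ℝ (Fin d) → ℝ)
    (hf : Differentiable ℝ f) (L : ℝ) (hL : 0 < L)
    (hlip : ∀ x y, ‖gradient f x - gradient f y‖ ≤ L * ‖x - y‖)
    (η : ℝ) (hη : 0 < η) (x : ℕ → EuclideanSpace ℝ (Fin d))
    (hx : ∀ k, x (k + 1) = x k - η • gradient f (x k))
    (s : ℕ) (hs : 1 ≤ s) :
    ‖∑ k ∈ Finset.range s, (gradient f (x k) - gradient f (x 0))‖ ≤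
      ((1 + η * L) ^ s - 1 - s * η * L) / (η * L) * ‖gradient f (x 0)‖ :=
  gd_local_perturbation_general f L hL hlip η hη x hx s
end

section
/- For every integer s ≥ 2, every L > 0, every c > 0, and every step size η with 0 < η ≤ c/(sL), one has ((1+ηL)^s − 1 − sηL)/( (s(s−1)/2)·(ηL)² ) ≤ (e^c − 1 − c)/(c²/2). -/
/-!
With `x = ηL`, both sides are power series divided by their quadratic coefficient:
`Σ_{k ≥ 2} C(s,k) x^k / (C(s,2) x²)` and `Σ_{k ≥ 2} (c^k / k!) / (c²/2)`. They compare term by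
term, since `C(s,k) k! = s(s-1)⋯(s-k+1) ≤ s(s-1) s^(k-2)` and `s x ≤ c`.
-/

open Finset Nat

theorem Nat.descFactorial_add_two_le (n k : ℕ) :
    n.descFactorial (k + 2) ≤ n * (n - 1) * n ^ k := by
  rw [← descFactorial_mul_descFactorial (show 2 ≤ k + 2 by omega), Nat.add_sub_cancel,
    descFactorial_succ, descFactorial_one, mul_comm, Nat.mul_comm (n - 1)]
  gcongr
  exact (descFactorial_le_pow _ _).trans (Nat.pow_le_pow_left (Nat.sub_le n 2) k)

theorem one_add_pow_sub_one_sub_mul_eq_sum {R : Type*} [CommRing R] (x : R) (n : ℕ) :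
    (1 + x) ^ n - 1 - n * x = ∑ k ∈ range n, (n.choose (k + 2) : R) * x ^ (k + 2) := by
  have hpow : (1 + x) ^ n = ∑ k ∈ range (n + 2), (n.choose k : R) * x ^ k := by
    rw [add_comm, add_pow, sum_range_succ _ (n + 1), choose_succ_self]
    simp [mul_comm]
  rw [hpow, sum_range_succ', sum_range_succ']
  simp

theorem Real.sum_pow_add_two_div_factorial_le {c : ℝ} (hc : 0 ≤ c) (n : ℕ) :
    ∑ k ∈ range n, c ^ (k + 2) / (k + 2)! ≤ Real.exp c - 1 - c := by
  have h := Real.sum_le_exp_of_nonneg hc (n + 2)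
  rw [sum_range_succ', sum_range_succ'] at h
  simp only [zero_add, pow_one, pow_zero, factorial_one, factorial_zero, cast_one, div_one] at h
  linarith

theorem choose_mul_factorial_mul_pow_le {n : ℕ} {x c : ℝ} (hx : 0 ≤ x) (hnx : n * x ≤ c) (k : ℕ) :
    (n.choose (k + 2) : ℝ) * (k + 2)! * x ^ k ≤ n * (n - 1) * c ^ k := by
  rcases n with _ | n
  · simp
  have hdesc : ((n + 1).choose (k + 2) : ℝ) * (k + 2)! ≤ (n + 1) * n * (n + 1) ^ k := by
    rw [← cast_mul, mul_comm, ← descFactorial_eq_factorial_mul_choose]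
    exact_mod_cast descFactorial_add_two_le (n + 1) k
  push_cast at hnx ⊢
  calc ((n + 1).choose (k + 2) : ℝ) * (k + 2)! * x ^ k ≤ (n + 1) * n * (n + 1) ^ k * x ^ k := by
        gcongr
    _ = (n + 1) * (n + 1 - 1) * ((n + 1) * x) ^ k := by rw [mul_pow]; ring
    _ ≤ (n + 1) * (n + 1 - 1) * c ^ k := by
      rw [add_sub_cancel_right]
      gcongr

theorem choose_mul_pow_mul_le {n : ℕ} {x c : ℝ} (hx : 0 ≤ x) (hnx : n * x ≤ c) (k : ℕ) :
    (n.choose (k + 2) : ℝ) * x ^ (k + 2) * (c ^ 2 / 2) ≤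
      c ^ (k + 2) / (k + 2)! * (n * (n - 1) / 2 * x ^ 2) := by
  have hfac : (0 : ℝ) < (k + 2)! := by positivity
  rw [div_mul_eq_mul_div, le_div_iff₀ hfac]
  calc (n.choose (k + 2) : ℝ) * x ^ (k + 2) * (c ^ 2 / 2) * (k + 2)!
      = (n.choose (k + 2) : ℝ) * (k + 2)! * x ^ k * (x ^ 2 * c ^ 2 / 2) := by ring
    _ ≤ n * (n - 1) * c ^ k * (x ^ 2 * c ^ 2 / 2) :=
      mul_le_mul_of_nonneg_right (choose_mul_factorial_mul_pow_le hx hnx k) (by positivity)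
    _ = c ^ (k + 2) * (n * (n - 1) / 2 * x ^ 2) := by ring

theorem kappa_le_of_eta_le (s : ℕ) (hs : 2 ≤ s) (L : ℝ) (hL : 0 < L)
    (c : ℝ) (hc : 0 < c) (η : ℝ) (hη : 0 < η) (hηc : η ≤ c / (s * L)) :
    ((1 + η * L) ^ s - 1 - s * (η * L)) / ((s : ℝ) * ((s : ℝ) - 1) / 2 * (η * L) ^ 2) ≤
      (Real.exp c - 1 - c) / (c ^ 2 / 2) := by
  set x := η * L
  have hx : 0 < x := by positivity
  have hsx : s * x ≤ c := by
    rw [le_div_iff₀ (by positivity)] at hηc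
    linarith
  have hs' : (2 : ℝ) ≤ s := by exact_mod_cast hs
  have hden : 0 < (s : ℝ) * (s - 1) / 2 * x ^ 2 := by
    have : (0 : ℝ) < s - 1 := by linarith
    positivity
  rw [one_add_pow_sub_one_sub_mul_eq_sum, div_le_div_iff₀ hden (by positivity)]
  calc (∑ k ∈ range s, (s.choose (k + 2) : ℝ) * x ^ (k + 2)) * (c ^ 2 / 2)
      ≤ (∑ k ∈ range s, c ^ (k + 2) / (k + 2)!) * (s * (s - 1) / 2 * x ^ 2) := by
        rw [sum_mul, sum_mul]
        exact sum_le_sum fun k _ ↦ choose_mul_pow_mul_le hx.le hsx k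
    _ ≤ (Real.exp c - 1 - c) * (s * (s - 1) / 2 * x ^ 2) := by
        gcongr
        exact Real.sum_pow_add_two_div_factorial_le hc.le s
end

section
/- Let F_1,…,F_m : ℝ^d → ℝ be differentiable with L-Lipschitz gradients and let F = (1/m)Σ_{i=1}^m F_i. Let x_1,…,x_m ∈ ℝ^d and x̄ = (1/m)Σ_{i=1}^m x_i, and suppose (1/m)Σ_{i=1}^m ‖∇F_i(x̄) − ∇F(x̄)‖² ≤ β²‖∇F(x̄)‖² + ξ². Then (1/m)Σ_{i=1}^m ‖∇F_i(x_i)‖² ≤ (3L²/m)·Σ_{i=1}^m ‖x_i − x̄‖² + 3(β²+1)·‖∇F(x̄)‖² + 3ξ². -/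
/-!
Split `∇F_i(x_i) = (∇F_i(x_i) - ∇F_i(x̄)) + (∇F_i(x̄) - ∇F(x̄)) + ∇F(x̄)` and use
`‖a + b + c‖² ≤ 3(‖a‖² + ‖b‖² + ‖c‖²)`. The first term is controlled by the Lipschitz bound, the
second, after averaging over `i`, by the heterogeneity assumption.
-/

open Finset

section ThreeTerms

variable {E : Type*} [SeminormedAddCommGroup E]

theorem norm_add₃_sq_le (a b c : E) :
    ‖a + b + c‖ ^ 2 ≤ 3 * (‖a‖ ^ 2 + ‖b‖ ^ 2 + ‖c‖ ^ 2) := by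
  have h := norm_add₃_le (a := a) (b := b) (c := c)
  have h0 : 0 ≤ ‖a + b + c‖ := norm_nonneg _
  nlinarith [sq_nonneg (‖a‖ - ‖b‖), sq_nonneg (‖b‖ - ‖c‖), sq_nonneg (‖a‖ - ‖c‖)]

theorem norm_sq_le_of_norm_sub_le {a b : E} {r : ℝ} (h : ‖a - b‖ ≤ r) (c : E) :
    ‖a‖ ^ 2 ≤ 3 * r ^ 2 + 3 * ‖b - c‖ ^ 2 + 3 * ‖c‖ ^ 2 := by
  have hr : ‖a - b‖ ^ 2 ≤ r ^ 2 := pow_le_pow_left₀ (norm_nonneg _) h 2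
  calc ‖a‖ ^ 2 = ‖(a - b) + (b - c) + c‖ ^ 2 := by rw [sub_add_sub_cancel, sub_add_cancel]
    _ ≤ 3 * (‖a - b‖ ^ 2 + ‖b - c‖ ^ 2 + ‖c‖ ^ 2) := norm_add₃_sq_le _ _ _
    _ ≤ 3 * r ^ 2 + 3 * ‖b - c‖ ^ 2 + 3 * ‖c‖ ^ 2 := by linarith

end ThreeTerms

theorem avg_local_grad_sq_bound_general {d m : ℕ}
    (F : Fin m → EuclideanSpace ℝ (Fin d) → ℝ)
    (L : ℝ)
    (hlip : ∀ i x y, ‖gradient (F i) x - gradient (F i) y‖ ≤ L * ‖x - y‖)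
    (Fbar : EuclideanSpace ℝ (Fin d) → ℝ)
    (x : Fin m → EuclideanSpace ℝ (Fin d))
    (xbar : EuclideanSpace ℝ (Fin d))
    (β ξ : ℝ)
    (hhet : (1 / (m : ℝ)) * ∑ i, ‖gradient (F i) xbar - gradient Fbar xbar‖ ^ 2 ≤
      β ^ 2 * ‖gradient Fbar xbar‖ ^ 2 + ξ ^ 2) :
    (1 / (m : ℝ)) * ∑ i, ‖gradient (F i) (x i)‖ ^ 2 ≤
      3 * L ^ 2 / m * ∑ i, ‖x i - xbar‖ ^ 2 +
        3 * (β ^ 2 + 1) * ‖gradient Fbar xbar‖ ^ 2 + 3 * ξ ^ 2 := by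
  set G := ‖gradient Fbar xbar‖
  set H := (1 / (m : ℝ)) * ∑ i, ‖gradient (F i) xbar - gradient Fbar xbar‖ ^ 2
  -- averaging the constant term gives `m / m`, which is at most `1` also when `m = 0`
  have hmm : G ^ 2 * (m / m) ≤ G ^ 2 :=
    mul_le_of_le_one_right (sq_nonneg G) (div_self_le_one (m : ℝ))
  calc (1 / (m : ℝ)) * ∑ i, ‖gradient (F i) (x i)‖ ^ 2
      ≤ (1 / (m : ℝ)) * ∑ i, (3 * (L * ‖x i - xbar‖) ^ 2 +
          3 * ‖gradient (F i) xbar - gradient Fbar xbar‖ ^ 2 + 3 * G ^ 2) := by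
        gcongr with i
        exact norm_sq_le_of_norm_sub_le (hlip i (x i) xbar) _
    _ = 3 * L ^ 2 / m * ∑ i, ‖x i - xbar‖ ^ 2 + 3 * H + 3 * (G ^ 2 * (m / m)) := by
        simp only [H, sum_add_distrib, ← mul_sum, sum_const, card_univ, Fintype.card_fin,
          nsmul_eq_mul, mul_pow]
        ring
    _ ≤ 3 * L ^ 2 / m * ∑ i, ‖x i - xbar‖ ^ 2 + 3 * (β ^ 2 + 1) * G ^ 2 + 3 * ξ ^ 2 := by
        linarith

theorem avg_local_grad_sq_bound {d m : ℕ} (hm : 0 < m)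
    (F : Fin m → EuclideanSpace ℝ (Fin d) → ℝ)
    (hF : ∀ i, Differentiable ℝ (F i)) (L : ℝ)
    (hlip : ∀ i x y, ‖gradient (F i) x - gradient (F i) y‖ ≤ L * ‖x - y‖)
    (Fbar : EuclideanSpace ℝ (Fin d) → ℝ)
    (hFbar : Fbar = fun x => (1 / (m : ℝ)) * ∑ i, F i x)
    (x : Fin m → EuclideanSpace ℝ (Fin d))
    (xbar : EuclideanSpace ℝ (Fin d)) (hxbar : xbar = (1 / (m : ℝ)) • ∑ i, x i)
    (β ξ : ℝ)
    (hhet : (1 / (m : ℝ)) * ∑ i, ‖gradient (F i) xbar - gradient Fbar xbar‖ ^ 2 ≤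
      β ^ 2 * ‖gradient Fbar xbar‖ ^ 2 + ξ ^ 2) :
    (1 / (m : ℝ)) * ∑ i, ‖gradient (F i) (x i)‖ ^ 2 ≤
      3 * L ^ 2 / m * ∑ i, ‖x i - xbar‖ ^ 2 +
        3 * (β ^ 2 + 1) * ‖gradient Fbar xbar‖ ^ 2 + 3 * ξ ^ 2 :=
  avg_local_grad_sq_bound_general F L hlip Fbar x xbar β ξ hhet
end

section
/- Let η ∈ ℝ, and let X^{(t)}, G^{(t)} ∈ ℝ^{d×m} for t ≥ 0 and W^{(t)} ∈ ℝ^{m×m} for t ≥ 0 satisfy: each W^{(t)} has all row sums and all column sums equal to 1 (W^{(t)}𝟙 = 𝟙 and 𝟙ᵀW^{(t)} = 𝟙ᵀ); the recursion X^{(t+1)} = (X^{(t)} − η·G^{(t)})·W^{(t)} holds for all t ≥ 0; and all columns of X^{(0)} are equal, i.e. X^{(0)}(I_m − J) = 0 where J = (1/m)𝟙𝟙ᵀ. Then for every t ≥ 1, X^{(t)}·(I_m − J) = −η·Σ_{q=0}^{t−1} G^{(q)}·( W^{(q)} W^{(q+1)} ⋯ W^{(t−1)} − J ). -/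
open Matrix Finset

/-- The `m × m` averaging matrix `(1/m) 𝟙𝟙ᵀ`. -/
noncomputable def avgMatrix (m : ℕ) : Matrix (Fin m) (Fin m) ℝ :=
  Matrix.of fun _ _ => (m : ℝ)⁻¹

/-! Since `J` commutes with every doubly stochastic `W` and `(1 - J) W = W - J`, the projection
`1 - J` can be moved through the recursion: `X (t+1) (1 - J) = (X t (1 - J) - η G t (1 - J)) W t`.
Unrolling this linear recursion from `X 0 (1 - J) = 0` and absorbing `J` into the products via
`J W = J` gives the formula. -/

section windowProd

variable {M : Type*} [Monoid M] (f : ℕ → M)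

def windowProd (q n : ℕ) : M :=
  (List.ofFn fun k : Fin n => f (q + (k : ℕ))).prod

theorem windowProd_succ (q n : ℕ) :
    windowProd f q (n + 1) = windowProd f q n * f (q + n) := by
  rw [windowProd, List.ofFn_succ', List.prod_concat]
  rfl

theorem windowProd_succ_sub {q t : ℕ} (hq : q ≤ t) :
    windowProd f q (t + 1 - q) = windowProd f q (t - q) * f t := by
  rw [Nat.sub_add_comm hq, windowProd_succ, Nat.add_sub_cancel' hq]

end windowProd

section avgMatrix

variable {m : ℕ} {A : Matrix (Fin m) (Fin m) ℝ}

theorem mul_avgMatrix_of_sum_row (hrow : ∀ i, ∑ j, A i j = 1) : A * avgMatrix m = avgMatrix m := by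
  ext i j
  simp [Matrix.mul_apply, avgMatrix, ← Finset.sum_mul, hrow]

theorem avgMatrix_mul_of_sum_col (hcol : ∀ j, ∑ i, A i j = 1) : avgMatrix m * A = avgMatrix m := by
  ext i j
  simp [Matrix.mul_apply, avgMatrix, ← Finset.mul_sum, hcol]

theorem one_sub_avgMatrix_mul (hcol : ∀ j, ∑ i, A i j = 1) :
    (1 - avgMatrix m) * A = A - avgMatrix m := by
  rw [Matrix.sub_mul, Matrix.one_mul, avgMatrix_mul_of_sum_col hcol]

theorem commute_one_sub_avgMatrix (hrow : ∀ i, ∑ j, A i j = 1) (hcol : ∀ j, ∑ i, A i j = 1) :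
    Commute A (1 - avgMatrix m) := by
  rw [Commute, SemiconjBy, Matrix.mul_sub, Matrix.mul_one, mul_avgMatrix_of_sum_row hrow,
    one_sub_avgMatrix_mul hcol]

end avgMatrix

theorem sum_mul_windowProd_sub_avgMatrix_succ {d m : ℕ} (G : ℕ → Matrix (Fin d) (Fin m) ℝ)
    (W : ℕ → Matrix (Fin m) (Fin m) ℝ) (hcol : ∀ t j, ∑ i, W t i j = 1) (t : ℕ) :
    ∑ q ∈ range (t + 1), G q * (windowProd W q (t + 1 - q) - avgMatrix m) =
      (∑ q ∈ range t, G q * (windowProd W q (t - q) - avgMatrix m) + G t * (1 - avgMatrix m))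
        * W t := by
  have hterm : ∀ q ≤ t, windowProd W q (t + 1 - q) - avgMatrix m =
      (windowProd W q (t - q) - avgMatrix m) * W t := by
    intro q hq
    rw [windowProd_succ_sub W hq, Matrix.sub_mul, avgMatrix_mul_of_sum_col (hcol t)]
  rw [Matrix.add_mul, Matrix.sum_mul, Finset.sum_range_succ]
  congr 1
  · refine Finset.sum_congr rfl fun q hq => ?_
    rw [hterm q (Finset.mem_range.mp hq).le, Matrix.mul_assoc]
  · rw [hterm t le_rfl, Nat.sub_self, Matrix.mul_assoc]
    rfl

theorem consensus_unrolling_general {d m : ℕ} (η : ℝ)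
    (X G : ℕ → Matrix (Fin d) (Fin m) ℝ) (W : ℕ → Matrix (Fin m) (Fin m) ℝ)
    (hrow : ∀ t i, ∑ j, W t i j = 1) (hcol : ∀ t j, ∑ i, W t i j = 1)
    (hrec : ∀ t, X (t + 1) = (X t - η • G t) * W t)
    (hinit : X 0 * ((1 : Matrix (Fin m) (Fin m) ℝ) - avgMatrix m) = 0)
    (t : ℕ) :
    X t * ((1 : Matrix (Fin m) (Fin m) ℝ) - avgMatrix m) =
      -η • ∑ q ∈ Finset.range t,
        G q * ((List.ofFn fun k : Fin (t - q) => W (q + (k : ℕ))).prod - avgMatrix m) := by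
  change _ = -η • ∑ q ∈ range t, G q * (windowProd W q (t - q) - avgMatrix m)
  induction t with
  | zero => simpa using hinit
  | succ t ih =>
    calc X (t + 1) * (1 - avgMatrix m)
        = (X t - η • G t) * (1 - avgMatrix m) * W t := by
          rw [hrec, Matrix.mul_assoc, (commute_one_sub_avgMatrix (hrow t) (hcol t)).eq,
            Matrix.mul_assoc]
      _ = (-η • ∑ q ∈ range t, G q * (windowProd W q (t - q) - avgMatrix m)
            - η • (G t * (1 - avgMatrix m))) * W t := by
          rw [Matrix.sub_mul, ih, Matrix.smul_mul]
      _ = _ := by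
          rw [sum_mul_windowProd_sub_avgMatrix_succ G W hcol, Matrix.sub_mul, Matrix.add_mul,
            Matrix.smul_mul, Matrix.smul_mul, smul_add, neg_smul, neg_smul, sub_eq_add_neg]

theorem consensus_unrolling {d m : ℕ} (η : ℝ)
    (X G : ℕ → Matrix (Fin d) (Fin m) ℝ) (W : ℕ → Matrix (Fin m) (Fin m) ℝ)
    (hrow : ∀ t i, ∑ j, W t i j = 1) (hcol : ∀ t j, ∑ i, W t i j = 1)
    (hrec : ∀ t, X (t + 1) = (X t - η • G t) * W t)
    (hinit : X 0 * ((1 : Matrix (Fin m) (Fin m) ℝ) - avgMatrix m) = 0)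
    (t : ℕ) (ht : 1 ≤ t) :
    X t * ((1 : Matrix (Fin m) (Fin m) ℝ) - avgMatrix m) =
      -η • ∑ q ∈ Finset.range t,
        G q * ((List.ofFn fun k : Fin (t - q) => W (q + (k : ℕ))).prod - avgMatrix m) :=
  consensus_unrolling_general η X G W hrow hcol hrec hinit t
end

section
/- Let m ≥ 1, let p : Fin m → ℝ with 0 ≤ p_z ≤ 1 for every z, and fix i ∈ Fin m. Then Σ_{A ⊆ Fin m, i ∈ A} (1/|A|) · (Π_{z∈A} p_z) · (Π_{z∉A} (1−p_z)) = p_i · ( 1 + Σ_{j=2}^m (−1)^{j+1} (1/j) · Σ_{S ⊆ (Fin m)∖{i}, |S| = j−1} Π_{z∈S} p_z ). -/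
/-!
Splitting off `i`, the left side is `p i` times `E[1 / (1 + #B)]` for the random subset `B` of the
remaining indices. Since `1 / (1 + k) = ∫₀¹ tᵏ dt`, this expectation is the integral over `[0, 1]`
of the generating function `∏ z, (1 - p z + p z * t) = ∏ z, (1 + p z * (t - 1))`; expanding the
right-hand product and using `∫₀¹ (t - 1)ᵏ dt = (-1)ᵏ / (k + 1)` gives the alternating sum.
-/

open Finset

theorem Finset.sum_range_eq_add_sum_Icc_two_sub_one {β : Type*} [AddCommMonoid β] (f : ℕ → β)
    {n : ℕ} (hn : 0 < n) : ∑ k ∈ range n, f k = f 0 + ∑ j ∈ Icc 2 n, f (j - 1) := by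
  obtain ⟨k, rfl⟩ := Nat.exists_eq_add_one_of_ne_zero hn.ne'
  rw [sum_range_succ', add_comm, ← Ico_add_one_right_eq_Icc, sum_Ico_eq_sum_range]
  simp [add_comm 2]

section BernoulliWeight

variable {α : Type*} [DecidableEq α]

/-- The probability that the random subset of `s` containing each `z` independently with
probability `p z` equals `B`. -/
def bernoulliWeight {R : Type*} [CommRing R] (s : Finset α) (p : α → R) (B : Finset α) : R :=
  (∏ z ∈ B, p z) * ∏ z ∈ s \ B, (1 - p z)

theorem sum_bernoulliWeight_mul_pow_card {R : Type*} [CommRing R] (s : Finset α) (p : α → R)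
    (t : R) :
    ∑ B ∈ s.powerset, bernoulliWeight s p B * t ^ #B =
      ∑ S ∈ s.powerset, (t - 1) ^ #S * ∏ z ∈ S, p z :=
  calc ∑ B ∈ s.powerset, bernoulliWeight s p B * t ^ #B
      = ∏ z ∈ s, (p z * t + (1 - p z)) := by
        simp only [prod_add, bernoulliWeight, prod_mul_distrib, prod_const]
        exact sum_congr rfl fun _ _ => by ring
    _ = ∏ z ∈ s, (p z * (t - 1) + 1) := prod_congr rfl fun _ _ => by ring
    _ = ∑ S ∈ s.powerset, (t - 1) ^ #S * ∏ z ∈ S, p z := by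
        simp only [prod_add_one, prod_mul_distrib, prod_const, mul_comm]

theorem sum_bernoulliWeight_div_card_add_one (s : Finset α) (p : α → ℝ) :
    ∑ B ∈ s.powerset, bernoulliWeight s p B / (#B + 1) =
      ∑ S ∈ s.powerset, (-1) ^ #S / (#S + 1) * ∏ z ∈ S, p z := by
  calc ∑ B ∈ s.powerset, bernoulliWeight s p B / (#B + 1)
      = ∫ t in (0 : ℝ)..1, ∑ B ∈ s.powerset, bernoulliWeight s p B * t ^ #B := by
        rw [intervalIntegral.integral_finsetSum fun _ _ =>
          (by fun_prop : Continuous _).intervalIntegrable 0 1]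
        simp [integral_pow, div_eq_mul_inv]
    _ = ∫ t in (0 : ℝ)..1, ∑ S ∈ s.powerset, (t - 1) ^ #S * ∏ z ∈ S, p z := by
        simp only [sum_bernoulliWeight_mul_pow_card]
    _ = ∑ S ∈ s.powerset, (-1) ^ #S / (#S + 1) * ∏ z ∈ S, p z := by
        rw [intervalIntegral.integral_finsetSum fun _ _ =>
          (by fun_prop : Continuous _).intervalIntegrable 0 1]
        refine sum_congr rfl fun S _ => ?_
        rw [intervalIntegral.integral_mul_const,
          intervalIntegral.integral_comp_sub_right (· ^ #S), integral_pow]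
        simp [pow_succ]

theorem Finset.sum_powerset_insert_filter_mem {β : Type*} [AddCommMonoid β]
    {a : α} {s : Finset α} (ha : a ∉ s) (f : Finset α → β) :
    ∑ A ∈ (insert a s).powerset with a ∈ A, f A = ∑ B ∈ s.powerset, f (insert a B) := by
  have hs : ∀ B ∈ s.powerset, a ∉ B := fun B hB h => ha (mem_powerset.mp hB h)
  rw [sum_filter, sum_powerset_insert ha]
  simp +contextual [hs]

end BernoulliWeight

theorem sum_powerset_neg_one_pow_div_card_add_one_eq_sum_Icc {α : Type*} (s : Finset α)
    (p : α → ℝ) :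
    ∑ S ∈ s.powerset, (-1) ^ #S / (#S + 1) * ∏ z ∈ S, p z =
      1 + ∑ j ∈ Icc 2 (#s + 1), (-1) ^ (j + 1) * (1 / (j : ℝ)) *
        ∑ S ∈ s.powerset with #S = j - 1, ∏ z ∈ S, p z := by
  rw [sum_powerset, sum_range_eq_add_sum_Icc_two_sub_one _ (#s).succ_pos]
  congr 1
  · simp
  refine sum_congr rfl fun j hj => ?_
  obtain ⟨k, rfl⟩ : ∃ k, j = k + 1 := ⟨j - 1, by grind⟩
  rw [powersetCard_eq_filter, mul_sum]
  refine sum_congr rfl fun S hS => ?_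
  rw [(mem_filter.mp hS).2]
  push_cast
  ring

theorem bernoulli_frac_expectation_eq_general {m : ℕ} (p : Fin m → ℝ) (i : Fin m) :
    ∑ A ∈ (Finset.univ : Finset (Fin m)).powerset.filter (fun A => i ∈ A),
        (1 / (A.card : ℝ)) * (∏ z ∈ A, p z) * ∏ z ∈ Aᶜ, (1 - p z) =
      p i * (1 + ∑ j ∈ Finset.Icc 2 m, (-1 : ℝ) ^ (j + 1) * (1 / (j : ℝ)) *
        ∑ S ∈ ((Finset.univ : Finset (Fin m)).erase i).powerset.filter
            (fun S => S.card = j - 1), ∏ z ∈ S, p z) := by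
  set E := (univ : Finset (Fin m)).erase i
  have hiE : i ∉ E := notMem_erase i univ
  have hcard : #E + 1 = m := by rw [card_erase_add_one (mem_univ i), card_fin]
  calc _ = p i * ∑ B ∈ E.powerset, bernoulliWeight E p B / (#B + 1) := by
        rw [← insert_erase (mem_univ i), sum_powerset_insert_filter_mem hiE, mul_sum]
        refine sum_congr rfl fun B hB => ?_
        have hiB : i ∉ B := fun h => hiE (mem_powerset.mp hB h)
        have hcompl : (insert i B)ᶜ = E \ B := by
          rw [compl_insert, compl_eq_univ_sdiff, erase_sdiff_comm]
        rw [card_insert_of_notMem hiB, prod_insert hiB, hcompl, bernoulliWeight]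
        push_cast
        ring
    _ = _ := by
        rw [sum_bernoulliWeight_div_card_add_one,
          sum_powerset_neg_one_pow_div_card_add_one_eq_sum_Icc, hcard]

theorem bernoulli_frac_expectation_eq {m : ℕ} (hm : 1 ≤ m)
    (p : Fin m → ℝ) (hp : ∀ z, 0 ≤ p z ∧ p z ≤ 1) (i : Fin m) :
    ∑ A ∈ (Finset.univ : Finset (Fin m)).powerset.filter (fun A => i ∈ A),
        (1 / (A.card : ℝ)) * (∏ z ∈ A, p z) * ∏ z ∈ Aᶜ, (1 - p z) =
      p i * (1 + ∑ j ∈ Finset.Icc 2 m, (-1 : ℝ) ^ (j + 1) * (1 / (j : ℝ)) *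
        ∑ S ∈ ((Finset.univ : Finset (Fin m)).erase i).powerset.filter
            (fun S => S.card = j - 1), ∏ z ∈ S, p z) :=
  bernoulli_frac_expectation_eq_general p i
end

section
/- Let m ≥ 2 and let M ∈ ℝ^{m×m} be symmetric with every row summing to 1 and with every entry M_{ij} ≥ δ for some δ > 0. Then the second largest eigenvalue of M (counted with multiplicity) satisfies λ₂(M) ≤ 1 − m²δ²/8. -/
/-!
Subtracting `δ` from every entry of `M` leaves a symmetric nonnegative matrix with row sums
`1 - m δ`, whose quadratic form is at most `(1 - m δ) ‖x‖²`; on the hyperplane `∑ x = 0` the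
subtracted constant matrix contributes nothing. The span of two orthonormal eigenvectors always
meets that hyperplane, so at most one eigenvalue exceeds `1 - m δ`. Hence
`λ₂ ≤ 1 - m δ ≤ 1 - m² δ² / 8`, the last step because `0 ≤ m δ ≤ 1`.
-/

open Matrix Finset

section

variable {ι : Type*} [Fintype ι]

theorem Matrix.IsSymm.dotProduct_mulVec_le_of_nonneg_of_sum_le {N : Matrix ι ι ℝ}
    (hN : N.IsSymm) (hnonneg : ∀ i j, 0 ≤ N i j) {r : ℝ} (hrow : ∀ i, ∑ j, N i j ≤ r) (x : ι → ℝ) :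
    x ⬝ᵥ N *ᵥ x ≤ r * (x ⬝ᵥ x) := by
  have hrow' : ∀ i, ∑ j, N i j * x i ^ 2 ≤ r * x i ^ 2 := fun i => by
    rw [← Finset.sum_mul]; exact mul_le_mul_of_nonneg_right (hrow i) (sq_nonneg _)
  have hcol : ∀ j, ∑ i, N i j * x j ^ 2 ≤ r * x j ^ 2 := fun j => by
    simpa only [hN.apply] using hrow' j
  calc x ⬝ᵥ N *ᵥ x = ∑ i, ∑ j, N i j * (x i * x j) := by
        simp only [dotProduct, mulVec, Finset.mul_sum]; congr! 2; ring
    _ ≤ ∑ i, ∑ j, N i j * ((x i ^ 2 + x j ^ 2) / 2) := by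
        gcongr with i _ j _
        · exact hnonneg i j
        · nlinarith [sq_nonneg (x i - x j)]
    _ = ((∑ i, ∑ j, N i j * x i ^ 2) + ∑ j, ∑ i, N i j * x j ^ 2) / 2 := by
        rw [Finset.sum_comm (f := fun j i => N i j * x j ^ 2), ← Finset.sum_add_distrib,
          Finset.sum_div]
        congr! 1 with i; rw [← Finset.sum_add_distrib, Finset.sum_div]; congr! 1; ring
    _ ≤ (∑ i, r * x i ^ 2 + ∑ j, r * x j ^ 2) / 2 := by
        gcongr with i _ j _
        · exact hrow' i
        · exact hcol j
    _ = r * (x ⬝ᵥ x) := by simp only [dotProduct, ← Finset.mul_sum, sq]; ring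

theorem Matrix.IsSymm.dotProduct_mulVec_le_of_sum_eq_zero {M : Matrix ι ι ℝ} (hM : M.IsSymm)
    {r δ : ℝ} (hrow : ∀ i, ∑ j, M i j ≤ r) (hentry : ∀ i j, δ ≤ M i j) {x : ι → ℝ}
    (hx : ∑ i, x i = 0) :
    x ⬝ᵥ M *ᵥ x ≤ (r - Fintype.card ι * δ) * (x ⬝ᵥ x) := by
  set J : Matrix ι ι ℝ := Matrix.of fun _ _ => δ
  have hJ : J *ᵥ x = 0 := by
    ext i; simp [J, mulVec, dotProduct, ← Finset.mul_sum, hx]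
  have hN : (M - J).IsSymm := hM.sub (by ext; rfl)
  calc x ⬝ᵥ M *ᵥ x = x ⬝ᵥ (M - J) *ᵥ x := by rw [sub_mulVec, hJ, sub_zero]
    _ ≤ _ := hN.dotProduct_mulVec_le_of_nonneg_of_sum_le
        (fun i j => by simpa [J] using hentry i j)
        (fun i => by simpa [J, Finset.sum_sub_distrib] using hrow i) x

end

theorem Matrix.IsHermitian.card_lt_eigenvalues_le_one {n : Type*} [Fintype n] [DecidableEq n]
    {A : Matrix n n ℝ} (hA : A.IsHermitian) {w : n → ℝ} {c : ℝ}
    (hquad : ∀ x, w ⬝ᵥ x = 0 → x ⬝ᵥ A *ᵥ x ≤ c * (x ⬝ᵥ x)) :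
    #{i | c < hA.eigenvalues i} ≤ 1 := by
  refine Finset.card_le_one.mpr fun i hi j hj => by_contra fun hij => ?_
  simp only [Finset.mem_filter, Finset.mem_univ, true_and] at hi hj
  set u : n → ℝ := ⇑(hA.eigenvectorBasis i)
  set v : n → ℝ := ⇑(hA.eigenvectorBasis j)
  have hdot : ∀ k l, (⇑(hA.eigenvectorBasis k) : n → ℝ) ⬝ᵥ ⇑(hA.eigenvectorBasis l) =
      if k = l then 1 else 0 := fun k l => by
    rw [← orthonormal_iff_ite.mp hA.eigenvectorBasis.orthonormal k l,
      EuclideanSpace.inner_eq_star_dotProduct, dotProduct_comm]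
    rfl
  have hgap : ∀ a b : ℝ, (a • u + b • v) ⬝ᵥ A *ᵥ (a • u + b • v)
      - c * ((a • u + b • v) ⬝ᵥ (a • u + b • v))
      = (hA.eigenvalues i - c) * a ^ 2 + (hA.eigenvalues j - c) * b ^ 2 := fun a b => by
    simp only [mulVec_add, mulVec_smul, u, v, hA.mulVec_eigenvectorBasis, add_dotProduct,
      dotProduct_add, smul_dotProduct, dotProduct_smul, hdot, Ne.symm hij, hij, if_true, if_false,
      smul_eq_mul]
    ring
  obtain ⟨a, b, hab, hw⟩ : ∃ a b : ℝ, (a ≠ 0 ∨ b ≠ 0) ∧ w ⬝ᵥ (a • u + b • v) = 0 := by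
    by_cases hu : w ⬝ᵥ u = 0
    · exact ⟨1, 0, by simp, by simp [hu]⟩
    · exact ⟨w ⬝ᵥ v, -(w ⬝ᵥ u), Or.inr (neg_ne_zero.mpr hu), by
        simp only [dotProduct_add, dotProduct_smul, smul_eq_mul]; ring⟩
  have hle := hquad _ hw
  have hform := hgap a b
  rcases hab with ha | hb
  · nlinarith [sq_pos_of_ne_zero ha, sq_nonneg b]
  · nlinarith [sq_pos_of_ne_zero hb, sq_nonneg a]

theorem Multiset.getD_sort_card_sub_two_le {α : Type*} [LinearOrder α] {s : Multiset α}
    {c : α} (hs : 2 ≤ Multiset.card s) (hc : s.countP (c < ·) ≤ 1) (d : α) :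
    (s.sort (· ≤ ·)).getD (Multiset.card s - 2) d ≤ c := by
  rw [← Multiset.sort_eq s (· ≤ ·), Multiset.coe_countP] at hc
  set L := s.sort (· ≤ ·)
  have hlen : L.length = Multiset.card s := Multiset.length_sort _
  by_contra! hlt
  rw [List.getD_eq_getElem _ _ (by omega)] at hlt
  have htop : c < L[Multiset.card s - 1] :=
    hlt.trans_le (List.pairwise_iff_getElem.mp (Multiset.pairwise_sort _ _) _ _ _ _ (by omega))
  have htail :
      L.drop (Multiset.card s - 2) = [L[Multiset.card s - 2], L[Multiset.card s - 1]] := by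
    rw [List.drop_eq_getElem_cons (by omega), List.drop_eq_getElem_cons (by omega),
      List.drop_eq_nil_of_le (by omega)]
    simp only [List.cons.injEq, and_true, true_and]
    congr 1; omega
  have : 2 ≤ L.countP (c < ·) := by
    calc 2 = (L.drop (Multiset.card s - 2)).countP (c < ·) := by simp [htail, hlt, htop]
      _ ≤ L.countP (c < ·) := (List.drop_sublist _ _).countP_le
  omega

theorem lambda2_le_of_entry_lb {m : ℕ} (hm : 2 ≤ m) (M : Matrix (Fin m) (Fin m) ℝ)
    (hsymm : M.IsSymm) (hrow : ∀ i, ∑ j, M i j = 1)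
    (δ : ℝ) (hδ : 0 < δ) (hentry : ∀ i j, δ ≤ M i j) :
    lambda2 M ≤ 1 - (m : ℝ) ^ 2 * δ ^ 2 / 8 := by
  have hM : M.IsHermitian := hsymm
  have hmδ : m * δ ≤ 1 := by
    have i₀ : Fin m := ⟨0, by omega⟩
    calc (m : ℝ) * δ = ∑ _j : Fin m, δ := by simp
      _ ≤ ∑ j, M i₀ j := Finset.sum_le_sum fun j _ => hentry i₀ j
      _ = 1 := hrow i₀
  have hcount : #{i | 1 - m * δ < hM.eigenvalues i} ≤ 1 :=
    hM.card_lt_eigenvalues_le_one (w := 1) fun x hx => by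
      simpa using hsymm.dotProduct_mulVec_le_of_sum_eq_zero (fun i => (hrow i).le) hentry
        (by rwa [one_dotProduct] at hx)
  calc lambda2 M ≤ 1 - m * δ := by
        rw [lambda2, dif_pos hM]
        simpa using Multiset.getD_sort_card_sub_two_le (s := univ.val.map hM.eigenvalues)
          (by simpa using hm) (by rwa [Multiset.countP_map]) 0
    _ ≤ 1 - (m : ℝ) ^ 2 * δ ^ 2 / 8 := by nlinarith [mul_nonneg (Nat.cast_nonneg m) hδ.le]
end
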